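/- If there exists any relational substitution σ with σ(L) ⊆ R, where R is recognized by a finite forest algebra (H,V) via φ, then there exists a relational substitution τ with τ(L) ⊆ R such that each τ(x) is recognized by (H,V) (namely τ = σ̂, the saturation of σ with respect to φ). Hence the existence of an arbitrary substitution satisfying σ(L) ⊆ R is equivalent to the existence of a substitution whose values are all recognized by (H,V). -/

import Mathlib

/-- Forests over an alphabet `A`. -/
inductive Forest (A : Type) : Type
  | nil : Forest A
  | cons : A → Forest A → Forest A → Forest A

namespace Forest

def append {A : Type} : Forest A → Forest A → Forest A
  | nil, g => g
  | cons a c f, g => cons a c (append f g)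

end Forest

/-- Application of a relational substitution `σ : X → 2^{F(A)}` to a forest over
`A ∪ X`. -/
def Subst {A X : Type} (σ : X → Set (Forest A)) : Forest (Sum A X) → Set (Forest A)
  | .nil => {Forest.nil}
  | .cons (Sum.inl a) c f =>
      {h | ∃ c' ∈ Subst σ c, ∃ f' ∈ Subst σ f, h = Forest.cons a c' f'}
  | .cons (Sum.inr x) c f =>
      {h | c = Forest.nil ∧ ∃ s ∈ σ x, ∃ f' ∈ Subst σ f, h = Forest.append s f'}

/-- `σ(L) = ⋃_{g∈L} σ(g)`. -/
def SubstL {A X : Type} (σ : X → Set (Forest A)) (L : Set (Forest (Sum A X))) :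
    Set (Forest A) :=
  ⋃ g ∈ L, Subst σ g

/-- The forest-algebra homomorphism from `F(A)` into an algebra with horizontal
monoid `H`. -/
def aeval {A H : Type} [Monoid H] (act : A → H → H) : Forest A → H
  | .nil => 1
  | .cons a c f => act a (aeval act c) * aeval act f

/-! The saturation `σ̂(x) = φ⁻¹(φ(σ(x)))` works because `φ = aeval act` is compositional:
a forest in `σ̂(g)` is built like one in `σ(g)`, with each variable replaced by a forest of the
same `φ`-value, so some forest in `σ(g)` has the same `φ`-value. Hence `σ̂(L)` lies in any
`φ`-saturated `R` containing `σ(L)`, and `σ̂(x)` is `φ`-saturated by construction. -/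

lemma aeval_append {A H : Type} [Monoid H] (act : A → H → H) :
    ∀ s f : Forest A, aeval act (Forest.append s f) = aeval act s * aeval act f
  | .nil, f => by simp [Forest.append, aeval]
  | .cons a c s, f => by simp [Forest.append, aeval, aeval_append act s f, mul_assoc]

section Saturation

variable {A X H : Type} [Monoid H] (act : A → H → H)

def saturate (σ : X → Set (Forest A)) : X → Set (Forest A) :=
  fun x => aeval act ⁻¹' (aeval act '' σ x)

lemma exists_mem_subst_aeval_eq {σ τ : X → Set (Forest A)}
    (hτ : ∀ x, ∀ s ∈ τ x, ∃ s' ∈ σ x, aeval act s' = aeval act s) :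
    ∀ g : Forest (Sum A X), ∀ h ∈ Subst τ g, ∃ h' ∈ Subst σ g, aeval act h' = aeval act h
  | .nil, h, hh => ⟨h, hh, rfl⟩
  | .cons (Sum.inl a) c f, _, ⟨c', hc', f', hf', rfl⟩ => by
      obtain ⟨c'', hc'', ec⟩ := exists_mem_subst_aeval_eq hτ c c' hc'
      obtain ⟨f'', hf'', ef⟩ := exists_mem_subst_aeval_eq hτ f f' hf'
      exact ⟨.cons a c'' f'', ⟨c'', hc'', f'', hf'', rfl⟩, by simp only [aeval, ec, ef]⟩
  | .cons (Sum.inr x) c f, _, ⟨hc, s, hs, f', hf', rfl⟩ => by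
      obtain ⟨s', hs', es⟩ := hτ x s hs
      obtain ⟨f'', hf'', ef⟩ := exists_mem_subst_aeval_eq hτ f f' hf'
      exact ⟨s'.append f'', ⟨hc, s', hs', f'', hf'', rfl⟩, by simp only [aeval_append, es, ef]⟩

lemma substL_saturate_subset {σ : X → Set (Forest A)} {R : Set (Forest A)}
    {L : Set (Forest (Sum A X))} (hR : aeval act ⁻¹' (aeval act '' R) ⊆ R)
    (hσ : SubstL σ L ⊆ R) : SubstL (saturate act σ) L ⊆ R := by
  intro h hh
  obtain ⟨g, hg, hhg⟩ := Set.mem_iUnion₂.mp hh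
  obtain ⟨h', hh', e⟩ := exists_mem_subst_aeval_eq act (fun _ _ hs => hs) g h hhg
  exact hR ⟨h', hσ (Set.mem_biUnion hg hh'), e⟩

lemma saturate_eq_preimage_image (σ : X → Set (Forest A)) (x : X) :
    saturate act σ x = aeval act ⁻¹' (aeval act '' saturate act σ x) :=
  Set.preimage_image_preimage.symm

end Saturation

/-- if some relational substitution `σ` satisfies `σ(L) ⊆ R`, where
`R` is recognized by the forest algebra via `φ = aeval act`, then there is a
relational substitution `τ` with `τ(L) ⊆ R` each of whose values `τ(x)` is
recognized by the same forest algebra via `φ`. -/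
theorem exists_recognizable_substitution {A X H : Type} [Monoid H]
    (act : A → H → H)
    (R : Set (Forest A)) (hR : R = aeval act ⁻¹' (aeval act '' R))
    (L : Set (Forest (Sum A X)))
    (h : ∃ σ : X → Set (Forest A), SubstL σ L ⊆ R) :
    ∃ τ : X → Set (Forest A), SubstL τ L ⊆ R ∧
      ∀ x, τ x = aeval act ⁻¹' (aeval act '' τ x) := by
  obtain ⟨σ, hσ⟩ := h
  exact ⟨saturate act σ, substL_saturate_subset act hR.symm.subset hσ,
    saturate_eq_preimage_image act σ⟩
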